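/- arXiv:2207.10322 — 2 statements merged into one kernel-verified Lean document; each statement's English description precedes it below -/
import Mathlib

section
/- Let ρ ∈ L²(ℝ^N × ℝ^N; ℂ) and let 1 ≤ i < j ≤ N. Then for every Z = (z_1,…,z_N) ∈ ℂ^N one has W̃[U_{i↔j}ρ](Z) = exp(−(conj(z_i)−conj(z_j))·(z_i−z_j)/(2ℏ)) · Ext_ρ(Z, σZ), where σZ is Z with the i-th and j-th entries exchanged. (Husimi exchange lemma, U-version.) -/
open MeasureTheory Complex

noncomputable def coh (ℏ : ℝ) {N : ℕ} (Z : Fin N → ℂ) (X : Fin N → ℝ) : ℂ :=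
  (((Real.pi * ℏ) ^ (-(N : ℝ)/4) : ℝ) : ℂ) *
    Complex.exp (-(∑ k, ((X k : ℂ) - ((Z k).re : ℂ))^2) / (2 * (ℏ : ℂ))) *
    Complex.exp (Complex.I * (∑ k, ((Z k).im : ℂ) * (X k : ℂ)) / (ℏ : ℂ))

noncomputable def matElem (ℏ : ℝ) {N : ℕ} (ρ : (Fin N → ℝ) → (Fin N → ℝ) → ℂ)
    (Z W : Fin N → ℂ) : ℂ :=
  ∫ X : Fin N → ℝ, ∫ Y : Fin N → ℝ,
    (starRingEnd ℂ) (coh ℏ Z X) * ρ X Y * coh ℏ W Y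

noncomputable def husimi (ℏ : ℝ) {N : ℕ} (ρ : (Fin N → ℝ) → (Fin N → ℝ) → ℂ)
    (Z : Fin N → ℂ) : ℂ :=
  ((((2 * Real.pi * ℏ) ^ N)⁻¹ : ℝ) : ℂ) * matElem ℏ ρ Z Z

noncomputable def extHusimi (ℏ : ℝ) {N : ℕ} (ρ : (Fin N → ℝ) → (Fin N → ℝ) → ℂ)
    (Z W : Fin N → ℂ) : ℂ :=
  ((((2 * Real.pi * ℏ) ^ N)⁻¹ : ℝ) : ℂ) *
    Complex.exp (((((∑ k, Complex.normSq (Z k)) + ∑ k, Complex.normSq (W k) : ℝ)) : ℂ) / (4 * (ℏ:ℂ))) *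
    Complex.exp (-(∑ k, (starRingEnd ℂ) (Z k) * W k) / (2 * (ℏ:ℂ))) *
    matElem ℏ ρ Z W

lemma coh_swap (ℏ : ℝ) {N : ℕ} (i j : Fin N) (Z : Fin N → ℂ) (Y : Fin N → ℝ) :
    coh ℏ Z (Y ∘ Equiv.swap i j) = coh ℏ (Z ∘ Equiv.swap i j) Y := by
  unfold coh
  have h1 : (∑ k, (((Y ∘ Equiv.swap i j) k : ℂ) - ((Z k).re : ℂ))^2)
      = ∑ k, ((Y k : ℂ) - (((Z ∘ Equiv.swap i j) k).re : ℂ))^2 := by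
    refine Fintype.sum_equiv (Equiv.swap i j) _ _ fun k => ?_
    simp [Function.comp, Equiv.swap_apply_self]
  have h2 : (∑ k, ((Z k).im : ℂ) * ((Y ∘ Equiv.swap i j) k : ℂ))
      = ∑ k, (((Z ∘ Equiv.swap i j) k).im : ℂ) * ((Y k : ℂ)) := by
    refine Fintype.sum_equiv (Equiv.swap i j) _ _ fun k => ?_
    simp [Function.comp, Equiv.swap_apply_self]
  rw [h1, h2]

lemma matElem_swap (ℏ : ℝ) {N : ℕ} (i j : Fin N)
    (ρ : (Fin N → ℝ) → (Fin N → ℝ) → ℂ) (Z : Fin N → ℂ) :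
    matElem ℏ (fun X Y => ρ X (Y ∘ Equiv.swap i j)) Z Z
      = matElem ℏ ρ Z (Z ∘ Equiv.swap i j) := by
  unfold matElem
  refine integral_congr_ae (Filter.Eventually.of_forall fun X => ?_)
  dsimp only
  have e : MeasurePreserving (MeasurableEquiv.piCongrLeft (fun _ : Fin N => ℝ) (Equiv.swap i j))
      volume volume :=
    MeasureTheory.volume_measurePreserving_piCongrLeft (fun _ : Fin N => ℝ) (Equiv.swap i j)
  have hcoe : ∀ Y : Fin N → ℝ,
      (MeasurableEquiv.piCongrLeft (fun _ : Fin N => ℝ) (Equiv.swap i j)) Y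
        = Y ∘ Equiv.swap i j := by
    intro Y; funext k
    simp [MeasurableEquiv.coe_piCongrLeft, Equiv.piCongrLeft_apply, eq_rec_constant, Equiv.symm_swap]
    generalize_proofs h
    revert h
    generalize (Equiv.swap i j) ((Equiv.swap i j) k) = m
    intro h
    subst h
    rfl
  rw [← e.integral_comp' (f := MeasurableEquiv.piCongrLeft (fun _ : Fin N => ℝ) (Equiv.swap i j))
        (g := fun Y => (starRingEnd ℂ) (coh ℏ Z X) * ρ X Y * coh ℏ (Z ∘ Equiv.swap i j) Y)]
  refine integral_congr_ae (Filter.Eventually.of_forall fun Y => ?_)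
  dsimp only
  simp only [hcoe]
  have hZ : (Z ∘ ⇑(Equiv.swap i j)) ∘ ⇑(Equiv.swap i j) = Z := by
    funext k; simp [Function.comp, Equiv.swap_apply_self]
  rw [coh_swap ℏ i j (Z ∘ ⇑(Equiv.swap i j)) Y, hZ]

theorem husimi_exchange_U (ℏ : ℝ) (hℏ : 0 < ℏ) (N : ℕ) (hN : 2 ≤ N)
    (ρ : (Fin N → ℝ) → (Fin N → ℝ) → ℂ)
    (hρ : MemLp (fun p : (Fin N → ℝ) × (Fin N → ℝ) => ρ p.1 p.2) 2 volume)
    (i j : Fin N) (hij : i < j) (Z : Fin N → ℂ) :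
    husimi ℏ (fun X Y => ρ X (Y ∘ Equiv.swap i j)) Z =
      Complex.exp (-(((starRingEnd ℂ) (Z i) - (starRingEnd ℂ) (Z j)) * (Z i - Z j)) / (2 * (ℏ:ℂ))) *
      extHusimi ℏ ρ Z (Z ∘ Equiv.swap i j) := by
  have hne : i ≠ j := hij.ne
  set σ := Equiv.swap i j with hσ
  -- sum identities
  have hsum1 : (∑ k, Complex.normSq ((Z ∘ σ) k)) = ∑ k, Complex.normSq (Z k) :=
    Equiv.sum_comp σ fun k => Complex.normSq (Z k)
  have key : (∑ k, ((Complex.normSq (Z k) : ℂ))) - ∑ k, (starRingEnd ℂ) (Z k) * (Z ∘ σ) k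
      = ((starRingEnd ℂ) (Z i) - (starRingEnd ℂ) (Z j)) * (Z i - Z j) := by
    rw [← Finset.sum_sub_distrib]
    have hz : ∀ k ∈ Finset.univ, k ∉ ({i, j} : Finset (Fin N)) →
        ((Complex.normSq (Z k) : ℂ)) - (starRingEnd ℂ) (Z k) * (Z ∘ σ) k = 0 := by
      intro k _ hk
      simp only [Finset.mem_insert, Finset.mem_singleton, not_or] at hk
      have : σ k = k := by
        rw [hσ, Equiv.swap_apply_of_ne_of_ne hk.1 hk.2]
      simp [Function.comp, this, ← Complex.mul_conj, mul_comm]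
    rw [← Finset.sum_subset (Finset.subset_univ ({i,j} : Finset (Fin N))) hz,
      Finset.sum_pair hne]
    simp only [Function.comp, hσ, Equiv.swap_apply_left, Equiv.swap_apply_right,
      ← Complex.mul_conj]
    ring_nf
  -- exponential identity
  have h2 : (2 * (ℏ:ℂ)) ≠ 0 := by
    simp [Complex.ofReal_ne_zero, hℏ.ne']
  have h4 : (4 * (ℏ:ℂ)) ≠ 0 := by
    simp [Complex.ofReal_ne_zero, hℏ.ne']
  have hexp : Complex.exp (-(((starRingEnd ℂ) (Z i) - (starRingEnd ℂ) (Z j)) * (Z i - Z j)) / (2 * (ℏ:ℂ)))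
      * Complex.exp (((((∑ k, Complex.normSq (Z k)) + ∑ k, Complex.normSq ((Z ∘ σ) k) : ℝ)) : ℂ) / (4 * (ℏ:ℂ)))
      * Complex.exp (-(∑ k, (starRingEnd ℂ) (Z k) * (Z ∘ σ) k) / (2 * (ℏ:ℂ))) = 1 := by
    rw [← Complex.exp_add, ← Complex.exp_add, ← Complex.exp_zero]
    congr 1
    rw [hsum1]
    push_cast
    simp only [Function.comp_apply] at key ⊢
    linear_combination (1 / (2 * (ℏ:ℂ))) * key
  unfold husimi extHusimi
  rw [matElem_swap]
  have : Complex.exp (-(((starRingEnd ℂ) (Z i) - (starRingEnd ℂ) (Z j)) * (Z i - Z j)) / (2 * (ℏ:ℂ))) *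
      (((((2 * Real.pi * ℏ) ^ N)⁻¹ : ℝ) : ℂ) *
      Complex.exp (((((∑ k, Complex.normSq (Z k)) + ∑ k, Complex.normSq ((Z ∘ σ) k) : ℝ)) : ℂ) / (4 * (ℏ:ℂ))) *
      Complex.exp (-(∑ k, (starRingEnd ℂ) (Z k) * (Z ∘ σ) k) / (2 * (ℏ:ℂ))) *
      matElem ℏ ρ Z (Z ∘ σ))
      = (Complex.exp (-(((starRingEnd ℂ) (Z i) - (starRingEnd ℂ) (Z j)) * (Z i - Z j)) / (2 * (ℏ:ℂ)))
      * Complex.exp (((((∑ k, Complex.normSq (Z k)) + ∑ k, Complex.normSq ((Z ∘ σ) k) : ℝ)) : ℂ) / (4 * (ℏ:ℂ)))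
      * Complex.exp (-(∑ k, (starRingEnd ℂ) (Z k) * (Z ∘ σ) k) / (2 * (ℏ:ℂ))))
      * ((((2 * Real.pi * ℏ) ^ N)⁻¹ : ℝ) * matElem ℏ ρ Z (Z ∘ σ)) := by ring
  rw [this, hexp, one_mul]
end

section
/- Let ρ ∈ L²(ℝ^N × ℝ^N; ℂ) and let 1 ≤ i < j ≤ N. Then for every Z = (z_1,…,z_N) ∈ ℂ^N one has W̃[V_{i↔j}ρ](Z) = exp(−|z_i−z_j|²/(2ℏ)) · Ext_ρ(σZ, Z), where σZ is Z with the i-th and j-th entries exchanged. (Husimi exchange lemma, V-version.) -/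
open MeasureTheory Complex

lemma coh_comp_swap (ℏ : ℝ) {N : ℕ} (Z : Fin N → ℂ) (X : Fin N → ℝ) (i j : Fin N) :
    coh ℏ Z (X ∘ Equiv.swap i j) = coh ℏ (Z ∘ Equiv.swap i j) X := by
  unfold coh
  have h1 : ∑ k, ((X (Equiv.swap i j k) : ℂ) - ((Z k).re : ℂ))^2
      = ∑ k, ((X k : ℂ) - (((Z (Equiv.swap i j k)).re) : ℂ))^2 := by
    rw [← Equiv.sum_comp (Equiv.swap i j) (fun k => ((X k : ℂ) - (((Z (Equiv.swap i j k)).re) : ℂ))^2)]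
    simp [Equiv.swap_apply_self]
  have h2 : ∑ k, ((Z k).im : ℂ) * (X (Equiv.swap i j k) : ℂ)
      = ∑ k, ((Z (Equiv.swap i j k)).im : ℂ) * (X k : ℂ) := by
    rw [← Equiv.sum_comp (Equiv.swap i j) (fun k => ((Z (Equiv.swap i j k)).im : ℂ) * (X k : ℂ))]
    simp [Equiv.swap_apply_self]
  simp only [Function.comp_apply, h1, h2]

lemma integral_comp_swap {N : ℕ} (i j : Fin N) (G : (Fin N → ℝ) → ℂ) :
    ∫ X : Fin N → ℝ, G (X ∘ Equiv.swap i j) = ∫ X : Fin N → ℝ, G X := by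
  have h := (volume_measurePreserving_piCongrLeft (fun _ : Fin N => ℝ)
    (Equiv.swap i j)).integral_comp' (f := MeasurableEquiv.piCongrLeft (fun _ : Fin N => ℝ)
    (Equiv.swap i j)) G
  rw [← h]
  refine integral_congr_ae (Filter.Eventually.of_forall fun X => ?_)
  have hfun : (MeasurableEquiv.piCongrLeft (fun _ : Fin N => ℝ) (Equiv.swap i j)) X
      = X ∘ Equiv.swap i j := by
    funext b
    simp [MeasurableEquiv.coe_piCongrLeft, Equiv.piCongrLeft_apply, eq_rec_constant,
      Equiv.symm_swap]
    exact eq_rec_constant _ _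
  simp only [hfun]

lemma sum_swap_mul {N : ℕ} (f g : Fin N → ℂ) {i j : Fin N} (hij : i ≠ j) :
    ∑ k, f (Equiv.swap i j k) * g k
      = (∑ k, f k * g k) - f i * g i - f j * g j + f j * g i + f i * g j := by
  have h : ∑ k, (f (Equiv.swap i j k) * g k - f k * g k)
      = ∑ k ∈ ({i, j} : Finset (Fin N)), (f (Equiv.swap i j k) * g k - f k * g k) := by
    refine (Finset.sum_subset (Finset.subset_univ _) fun k _ hk => ?_).symm
    have hki : k ≠ i := by simp at hk; tauto
    have hkj : k ≠ j := by simp at hk; tauto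
    rw [Equiv.swap_apply_of_ne_of_ne hki hkj]
    ring
  rw [Finset.sum_sub_distrib] at h
  rw [Finset.sum_pair hij, Equiv.swap_apply_left, Equiv.swap_apply_right] at h
  linear_combination h


theorem husimi_exchange_V (ℏ : ℝ) (hℏ : 0 < ℏ) (N : ℕ) (hN : 2 ≤ N)
    (ρ : (Fin N → ℝ) → (Fin N → ℝ) → ℂ)
    (hρ : MemLp (fun p : (Fin N → ℝ) × (Fin N → ℝ) => ρ p.1 p.2) 2 volume)
    (i j : Fin N) (hij : i < j) (Z : Fin N → ℂ) :
    husimi ℏ (fun X Y => ρ (X ∘ Equiv.swap i j) Y) Z =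
      Complex.exp (-((Complex.normSq (Z i - Z j) : ℝ) : ℂ) / (2 * (ℏ:ℂ))) *
      extHusimi ℏ ρ (Z ∘ Equiv.swap i j) Z := by
  have hne : i ≠ j := Fin.ne_of_lt hij
  set σ := Equiv.swap i j with hσ
  -- Step 1: the matrix element identity
  have hM : matElem ℏ (fun X Y => ρ (X ∘ σ) Y) Z Z = matElem ℏ ρ (Z ∘ σ) Z := by
    unfold matElem
    have := integral_comp_swap i j (fun X : Fin N → ℝ =>
      ∫ Y : Fin N → ℝ, (starRingEnd ℂ) (coh ℏ (Z ∘ σ) X) * ρ X Y * coh ℏ Z Y)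
    rw [← this]
    refine integral_congr_ae (Filter.Eventually.of_forall fun X => ?_)
    have hc : coh ℏ (Z ∘ σ) (X ∘ σ) = coh ℏ Z X := by
      rw [coh_comp_swap]
      congr 1
      funext k
      simp [σ, Function.comp, Equiv.swap_apply_self]
    rw [hσ] at hc ⊢
    simp only [hc]
  -- Step 2: the exponential factors
  have hS : (∑ k, Complex.normSq ((Z ∘ σ) k)) = ∑ k, Complex.normSq (Z k) :=
    Equiv.sum_comp σ (fun k => Complex.normSq (Z k))
  have hT : ∑ k, (starRingEnd ℂ) ((Z ∘ σ) k) * Z k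
      = (∑ k, (starRingEnd ℂ) (Z k) * Z k)
        - (starRingEnd ℂ) (Z i) * Z i - (starRingEnd ℂ) (Z j) * Z j
        + (starRingEnd ℂ) (Z j) * Z i + (starRingEnd ℂ) (Z i) * Z j :=
    sum_swap_mul (fun k => (starRingEnd ℂ) (Z k)) Z hne
  have hsum : ((∑ k, Complex.normSq (Z k) : ℝ) : ℂ)
      = ∑ k, (starRingEnd ℂ) (Z k) * Z k := by
    push_cast
    refine Finset.sum_congr rfl fun k _ => ?_
    rw [mul_comm, Complex.mul_conj]
  have hd : ((Complex.normSq (Z i - Z j) : ℝ) : ℂ)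
      = (starRingEnd ℂ) (Z i - Z j) * (Z i - Z j) := by
    rw [mul_comm, Complex.mul_conj]
  have hℏc : (ℏ : ℂ) ≠ 0 := Complex.ofReal_ne_zero.mpr (ne_of_gt hℏ)
  have hexp :
      Complex.exp (-((Complex.normSq (Z i - Z j) : ℝ) : ℂ) / (2 * (ℏ:ℂ))) *
      (Complex.exp (((((∑ k, Complex.normSq ((Z ∘ σ) k)) + ∑ k, Complex.normSq (Z k) : ℝ)) : ℂ) / (4 * (ℏ:ℂ))) *
       Complex.exp (-(∑ k, (starRingEnd ℂ) ((Z ∘ σ) k) * Z k) / (2 * (ℏ:ℂ)))) = 1 := by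
    rw [← Complex.exp_add, ← Complex.exp_add, ← Complex.exp_zero]
    congr 1
    rw [hS, hT]
    push_cast [hsum]
    rw [hd]
    field_simp
    rw [map_sub]
    ring
  -- Conclude
  unfold husimi extHusimi
  rw [hM]
  rw [show Complex.exp (-((Complex.normSq (Z i - Z j) : ℝ) : ℂ) / (2 * (ℏ:ℂ))) *
      (((((2 * Real.pi * ℏ) ^ N)⁻¹ : ℝ) : ℂ) *
        Complex.exp (((((∑ k, Complex.normSq ((Z ∘ σ) k)) + ∑ k, Complex.normSq (Z k) : ℝ)) : ℂ) / (4 * (ℏ:ℂ))) *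
        Complex.exp (-(∑ k, (starRingEnd ℂ) ((Z ∘ σ) k) * Z k) / (2 * (ℏ:ℂ))) *
        matElem ℏ ρ (Z ∘ σ) Z)
      = (Complex.exp (-((Complex.normSq (Z i - Z j) : ℝ) : ℂ) / (2 * (ℏ:ℂ))) *
         (Complex.exp (((((∑ k, Complex.normSq ((Z ∘ σ) k)) + ∑ k, Complex.normSq (Z k) : ℝ)) : ℂ) / (4 * (ℏ:ℂ))) *
          Complex.exp (-(∑ k, (starRingEnd ℂ) ((Z ∘ σ) k) * Z k) / (2 * (ℏ:ℂ))))) *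
        (((((2 * Real.pi * ℏ) ^ N)⁻¹ : ℝ) : ℂ) * matElem ℏ ρ (Z ∘ σ) Z) by ring]
  rw [hexp, one_mul]
end
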